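/- arXiv:0901.0182 — 5 statements merged into one kernel-verified Lean document; each statement's English description precedes it below -/
import Mathlib

section
/- If (f_n) is a sequence of convex functions on an interval I converging pointwise to a function f on I, then f is convex and the convergence is uniform on every compact subset of the interior of I. -/
/-! Convexity is a closed condition, so it passes to pointwise limits. A pointwise bounded
family of convex functions is uniformly bounded on every interval `[x - r, x + r] ⊆ I`: from
above by the values at the endpoints, from below through the midpoint. By the standard
Lipschitz estimate for bounded convex functions the family is then equi-Lipschitz near each
interior point, and equicontinuity upgrades pointwise convergence to uniform convergence on
compact sets (Ascoli). -/

open Filter Metric Set Topology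

theorem ConvexOn.of_tendsto {𝕜 E β ι : Type*} [Semiring 𝕜] [PartialOrder 𝕜] [AddCommMonoid E]
    [SMul 𝕜 E] [AddCommMonoid β] [PartialOrder β] [SMul 𝕜 β] [TopologicalSpace β]
    [OrderClosedTopology β] [ContinuousAdd β] [ContinuousConstSMul 𝕜 β]
    {s : Set E} {F : ι → E → β} {f : E → β} {l : Filter ι} [l.NeBot]
    (hF : ∀ᶠ i in l, ConvexOn 𝕜 s (F i)) (h : ∀ x ∈ s, Tendsto (F · x) l (𝓝 (f x))) :
    ConvexOn 𝕜 s f := by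
  obtain ⟨_, hs, -⟩ := hF.exists
  refine ⟨hs, fun x hx y hy a b ha hb hab => le_of_tendsto_of_tendsto (h _ (hs hx hy ha hb hab))
    (((h x hx).const_smul a).add ((h y hy).const_smul b)) ?_⟩
  filter_upwards [hF] with i hi using hi.2 hx hy ha hb hab

theorem EquicontinuousOn.tendstoUniformlyOn_of_tendsto {ι X α : Type*} [TopologicalSpace X]
    [UniformSpace α] {F : ι → X → α} {f : X → α} {l : Filter ι} {K : Set X}
    (hF : EquicontinuousOn F K) (hK : IsCompact K)
    (h : ∀ x ∈ K, Tendsto (F · x) l (𝓝 (f x))) : TendstoUniformlyOn F f l K := by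
  have hpi : Tendsto ((⋃₀ {K}).domRestrict ∘ F) l (𝓝 ((⋃₀ {K}).domRestrict f)) := by
    rw [tendsto_pi_nhds]
    rintro ⟨x, hx⟩
    exact h x (by simpa using hx)
  have := (EquicontinuousOn.tendsto_uniformOnFun_iff_pi' (by simpa) (by simpa) l f).2 hpi
  exact UniformOnFun.tendsto_iff_tendstoUniformlyOn.1 this K rfl

theorem ConvexOn.abs_le_of_mem_Icc {f : ℝ → ℝ} {c r C x : ℝ}
    (hf : ConvexOn ℝ (Icc (c - r) (c + r)) f) (hl : |f (c - r)| ≤ C) (hc : |f c| ≤ C)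
    (hr : |f (c + r)| ≤ C) (hx : x ∈ Icc (c - r) (c + r)) : |f x| ≤ 3 * C := by
  have hcr : c - r ≤ c + r := hx.1.trans hx.2
  have upper : ∀ y ∈ Icc (c - r) (c + r), f y ≤ C := fun y hy =>
    (hf.le_max_of_mem_Icc (left_mem_Icc.2 hcr) (right_mem_Icc.2 hcr) hy).trans
      (max_le ((le_abs_self _).trans hl) ((le_abs_self _).trans hr))
  -- `c` is the midpoint of `x` and `2 c - x`, so `f x ≥ 2 f c - f (2 c - x)`.
  have hw : 2 * c - x ∈ Icc (c - r) (c + r) := ⟨by linarith [hx.2], by linarith [hx.1]⟩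
  have hmid := hf.2 hx hw (by norm_num : (0 : ℝ) ≤ 1 / 2) (by norm_num : (0 : ℝ) ≤ 1 / 2)
    (by norm_num)
  simp only [smul_eq_mul] at hmid
  rw [show 1 / 2 * x + 1 / 2 * (2 * c - x) = c by ring] at hmid
  rw [abs_le]
  constructor
  · linarith [neg_abs_le (f c), upper _ hw]
  · linarith [upper x hx, abs_nonneg (f c)]

theorem equicontinuousAt_of_convexOn {ι : Type*} {I : Set ℝ} {F : ι → ℝ → ℝ}
    (hF : ∀ i, ConvexOn ℝ I (F i)) (hbdd : ∀ y ∈ I, ∃ C, ∀ i, |F i y| ≤ C) {x : ℝ}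
    (hx : x ∈ interior I) : EquicontinuousAt F x := by
  obtain ⟨ε, hε, hball⟩ := Metric.isOpen_iff.1 isOpen_interior x hx
  set r := ε / 2
  have hr : 0 < r := by positivity
  have hIcc : Icc (x - r) (x + r) ⊆ I := by
    rw [← Real.closedBall_eq_Icc]
    exact (closedBall_subset_ball (half_lt_self hε)).trans (hball.trans interior_subset)
  obtain ⟨C₁, h₁⟩ := hbdd (x - r) (hIcc ⟨le_rfl, by linarith⟩)
  obtain ⟨C₂, h₂⟩ := hbdd x (hIcc ⟨by linarith, by linarith⟩)
  obtain ⟨C₃, h₃⟩ := hbdd (x + r) (hIcc ⟨by linarith, le_rfl⟩)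
  set C := max (max C₁ C₂) C₃
  have hbound : ∀ i, ∀ y ∈ Icc (x - r) (x + r), |F i y| ≤ 3 * C := fun i y hy =>
    ((hF i).subset hIcc (convex_Icc _ _)).abs_le_of_mem_Icc
      ((h₁ i).trans (by simp [C])) ((h₂ i).trans (by simp [C])) ((h₃ i).trans (by simp [C])) hy
  have hballIcc : ball x r ⊆ Icc (x - r) (x + r) := by
    rw [Real.ball_eq_Ioo]; exact Ioo_subset_Icc_self
  have hlip : ∀ i, LipschitzOnWith (2 * (3 * C) / (r / 2)).toNNReal (F i) (ball x (r - r / 2)) :=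
    fun i => ((hF i).subset (hballIcc.trans hIcc) (convex_ball x r)).lipschitzOnWith_of_abs_le
      (by positivity) fun a ha => hbound i a (hballIcc ha)
  have hequi := (LipschitzOnWith.uniformEquicontinuousOn F _ hlip).equicontinuousOn x
    (mem_ball_self (by linarith))
  have hnhds : ball x (r - r / 2) ∈ 𝓝 x := ball_mem_nhds x (by linarith)
  rw [EquicontinuousWithinAt, nhdsWithin_eq_nhds.2 hnhds] at hequi
  exact hequi

theorem stmt_1_general (I : Set ℝ)
    (f : ℕ → ℝ → ℝ) (g : ℝ → ℝ)
    (hconv : ∀ n, ConvexOn ℝ I (f n))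
    (hptw : ∀ x ∈ I, Filter.Tendsto (fun n => f n x) Filter.atTop (nhds (g x))) :
    ConvexOn ℝ I g ∧
      ∀ K : Set ℝ, IsCompact K → K ⊆ interior I →
        TendstoUniformlyOn f g Filter.atTop K := by
  have hbdd : ∀ y ∈ I, ∃ C, ∀ n, |f n y| ≤ C := fun y hy => by
    obtain ⟨C, hC⟩ := (hptw y hy).abs.bddAbove_range
    exact ⟨C, fun n => hC ⟨n, rfl⟩⟩
  refine ⟨ConvexOn.of_tendsto (.of_forall hconv) hptw, fun K hK hKI => ?_⟩
  refine EquicontinuousOn.tendstoUniformlyOn_of_tendsto (fun x hx => ?_) hK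
    fun x hx => hptw x (interior_subset (hKI hx))
  exact (equicontinuousAt_of_convexOn hconv hbdd (hKI hx)).equicontinuousWithinAt K

theorem stmt_1 (I : Set ℝ) (hI : Convex ℝ I)
    (f : ℕ → ℝ → ℝ) (g : ℝ → ℝ)
    (hconv : ∀ n, ConvexOn ℝ I (f n))
    (hptw : ∀ x ∈ I, Filter.Tendsto (fun n => f n x) Filter.atTop (nhds (g x))) :
    ConvexOn ℝ I g ∧
      ∀ K : Set ℝ, IsCompact K → K ⊆ interior I →
        TendstoUniformlyOn f g Filter.atTop K :=
  stmt_1_general I f g hconv hptw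
end

section
/- Under the hypotheses of Hammersley's lemma, for every m ≥ 1 the limit λ = lim h(n)/n satisfies λ ≤ h(m)/m − Δ(m)/m + 4 ∑_{r=2m}^∞ Δ(r)/(r(r+1)). -/
/-!
Doubling in the subadditivity inequality gives `h(2n)/(2n) ≤ h(n)/n + Δ(2n)/(2n)`, so along
`n = 2ᵏm` the ratio `h(n)/n` exceeds `h(m)/m` by at most `∑ⱼ Δ(2ʲm)/(2ʲm)`. Since `Δ` is monotone
and `∑_{b ≤ r < 2b} 1/(r(r+1)) = 1/(2b)`, each term `Δ(b)/b` is at most twice the block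
`∑_{b ≤ r < 2b} Δ(r)/(r(r+1))`, and these blocks tile `[2m, ∞)`; letting `k → ∞` gives
`λ ≤ h(m)/m + 2S` with `S = ∑_{r ≥ 2m} Δ(r)/(r(r+1))`. The same comparison over the whole tail
gives `Δ(m)/m ≤ 2S`, which pays for the extra `-Δ(m)/m`.
-/

open Finset Filter Topology

lemma sum_Ico_inv_mul_succ {a N : ℕ} (ha : 1 ≤ a) (haN : a ≤ N) :
    ∑ r ∈ Ico a N, ((r : ℝ) * (r + 1))⁻¹ = (a : ℝ)⁻¹ - (N : ℝ)⁻¹ := by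
  have hsub := sum_Ico_sub (fun r : ℕ => -((r : ℝ)⁻¹)) haN
  simp only [Nat.cast_add, Nat.cast_one] at hsub
  rw [← neg_sub_neg, ← hsub]
  refine sum_congr rfl fun r hr => ?_
  have hr : (0 : ℝ) < r := by exact_mod_cast ha.trans (mem_Ico.mp hr).1
  field_simp
  ring

lemma Summable.tendsto_sum_Ico_tsum_nat_add {G : Type*} [AddCommGroup G] [TopologicalSpace G]
    [IsTopologicalAddGroup G] {f : ℕ → G} (hf : Summable f) (a : ℕ) :
    Tendsto (fun N => ∑ r ∈ Ico a N, f r) atTop (𝓝 (∑' r, f (r + a))) := by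
  refine (((summable_nat_add_iff a).mpr hf).tendsto_sum_tsum_nat.comp
    (tendsto_sub_atTop_nat a)).congr fun N => ?_
  simp only [Function.comp, sum_Ico_eq_sum_range, add_comm a]

section Monotone

variable {Δ : ℕ → ℝ}

lemma Monotone.mul_inv_sub_inv_le_sum_Ico (hΔ : Monotone Δ) {a b N : ℕ} (hba : b ≤ a)
    (ha : 1 ≤ a) (haN : a ≤ N) :
    Δ b * ((a : ℝ)⁻¹ - (N : ℝ)⁻¹) ≤ ∑ r ∈ Ico a N, Δ r / ((r : ℝ) * (r + 1)) := by
  rw [← sum_Ico_inv_mul_succ ha haN, mul_sum]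
  refine sum_le_sum fun r hr => ?_
  rw [div_eq_mul_inv]
  exact mul_le_mul_of_nonneg_right (hΔ (hba.trans (mem_Ico.mp hr).1)) (by positivity)

lemma Monotone.div_le_two_mul_sum_Ico (hΔ : Monotone Δ) {a : ℕ} (ha : 1 ≤ a) :
    Δ a / a ≤ 2 * ∑ r ∈ Ico a (2 * a), Δ r / ((r : ℝ) * (r + 1)) := by
  have hblock := hΔ.mul_inv_sub_inv_le_sum_Ico le_rfl ha (by omega : a ≤ 2 * a)
  have ha' : (0 : ℝ) < a := by exact_mod_cast ha
  have half : Δ a * ((a : ℝ)⁻¹ - ((2 * a : ℕ) : ℝ)⁻¹) = Δ a / a / 2 := by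
    push_cast
    field_simp
    ring
  linarith

lemma Monotone.div_le_tsum_nat_add (hΔ : Monotone Δ)
    (hΔsum : Summable fun r : ℕ => Δ r / ((r : ℝ) * (r + 1))) {a b : ℕ} (hba : b ≤ a) (ha : 1 ≤ a) :
    Δ b / a ≤ ∑' r : ℕ, Δ (r + a) / (((r + a : ℕ) : ℝ) * ((r + a : ℕ) + 1)) := by
  have hinv : Tendsto (fun N : ℕ => Δ b * ((a : ℝ)⁻¹ - (N : ℝ)⁻¹)) atTop (𝓝 (Δ b / a)) := by
    simpa [div_eq_mul_inv] using
      (tendsto_inv_atTop_zero.comp tendsto_natCast_atTop_atTop).const_sub ((a : ℝ)⁻¹)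
        |>.const_mul (Δ b)
  exact le_of_tendsto_of_tendsto hinv (hΔsum.tendsto_sum_Ico_tsum_nat_add a)
    (eventually_atTop.mpr ⟨a, fun N hN => hΔ.mul_inv_sub_inv_le_sum_Ico hba ha hN⟩)

end Monotone

section Doubling

variable {h Δ : ℕ → ℝ}

lemma div_two_mul_le_of_le {n : ℕ} (hn : 1 ≤ n) (hdouble : h (n + n) ≤ h n + h n + Δ (n + n)) :
    h (2 * n) / ((2 * n : ℕ) : ℝ) ≤ h n / n + Δ (2 * n) / ((2 * n : ℕ) : ℝ) := by
  have hn' : (0 : ℝ) < n := by exact_mod_cast hn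
  rw [two_mul]
  calc h (n + n) / ((n + n : ℕ) : ℝ) ≤ (h n + h n + Δ (n + n)) / ((n + n : ℕ) : ℝ) := by
        gcongr
    _ = h n / n + Δ (n + n) / ((n + n : ℕ) : ℝ) := by push_cast; field_simp

lemma div_two_pow_mul_le (hΔ : Monotone Δ)
    (hdouble : ∀ n : ℕ, 1 ≤ n → h (n + n) ≤ h n + h n + Δ (n + n)) {m : ℕ} (hm : 1 ≤ m)
    (k : ℕ) :
    h (2 ^ k * m) / ((2 ^ k * m : ℕ) : ℝ)
      ≤ h m / m + 2 * ∑ r ∈ Ico (2 * m) (2 ^ k * (2 * m)), Δ r / ((r : ℝ) * (r + 1)) := by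
  induction k with
  | zero => simp
  | succ k ih =>
    set n := 2 ^ k * m with hn_def
    have hmn : m ≤ n := Nat.le_mul_of_pos_left m (by positivity)
    have hn : 1 ≤ n := hm.trans hmn
    have hstep := div_two_mul_le_of_le hn (hdouble n hn)
    have hblock := hΔ.div_le_two_mul_sum_Ico (a := 2 * n) (by omega)
    have hsplit := sum_Ico_consecutive (fun r : ℕ => Δ r / ((r : ℝ) * (r + 1)))
      (by omega : 2 * m ≤ 2 * n) (by omega : 2 * n ≤ 2 * (2 * n))
    rw [show 2 ^ (k + 1) * m = 2 * n by ring, show 2 ^ (k + 1) * (2 * m) = 2 * (2 * n) by ring,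
      ← hsplit]
    rw [show 2 ^ k * (2 * m) = 2 * n by ring] at ih
    linarith

end Doubling

lemma tendsto_two_pow_mul_atTop {c : ℕ} (hc : 1 ≤ c) :
    Tendsto (fun k : ℕ => 2 ^ k * c) atTop atTop :=
  tendsto_atTop_mono (fun k => Nat.le_mul_of_pos_right (2 ^ k) hc)
    (tendsto_pow_atTop_atTop_of_one_lt one_lt_two)

theorem stmt_3 (h : ℕ → ℝ) (Δ : ℕ → ℝ) (hΔmono : Monotone Δ)
    (hΔsum : Summable (fun r : ℕ => Δ r / ((r : ℝ) * (r + 1))))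
    (hsub : ∀ n m : ℕ, 1 ≤ n → 1 ≤ m → h (n + m) ≤ h n + h m + Δ (n + m))
    (L : ℝ) (hL : Filter.Tendsto (fun n : ℕ => h n / n) Filter.atTop (nhds L))
    (m : ℕ) (hm : 1 ≤ m) :
    L ≤ h m / m - Δ m / m
        + 4 * ∑' r : ℕ, Δ (r + 2 * m) / (((r + 2 * m : ℕ) : ℝ) * ((r + 2 * m : ℕ) + 1)) := by
  set S := ∑' r : ℕ, Δ (r + 2 * m) / (((r + 2 * m : ℕ) : ℝ) * ((r + 2 * m : ℕ) + 1))
  have hlim : L ≤ h m / m + 2 * S :=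
    le_of_tendsto_of_tendsto' (hL.comp (tendsto_two_pow_mul_atTop hm))
      (((hΔsum.tendsto_sum_Ico_tsum_nat_add (2 * m)).comp
        (tendsto_two_pow_mul_atTop (by omega))).const_mul 2 |>.const_add _)
      (div_two_pow_mul_le hΔmono (fun n hn => hsub n n hn hn) hm)
  have htail : Δ m / ((2 * m : ℕ) : ℝ) ≤ S := hΔmono.div_le_tsum_nat_add hΔsum (by omega) (by omega)
  have hm' : (0 : ℝ) < m := by exact_mod_cast hm
  have hhalf : Δ m / ((2 * m : ℕ) : ℝ) = Δ m / m / 2 := by push_cast; field_simp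
  linarith
end

section
/- Let X be a real random variable with E[X] < 0, P(X > 0) > 0, and define a = sup{t ≥ 0 : E[e^{tX}] < ∞}. If a = ∞, then there exists a unique w > 0 with E[e^{wX}] = 1. -/
/-!
Let `M(t) = E[exp (t X)]`. Since `X ≠ 0` with positive probability, `M` is strictly convex on
`[0, ∞)`, so besides `M 0 = 1` it takes the value `1` at most once more. Its right derivative at
`0` is `E[X] < 0`, so `M` dips below `1` just to the right of `0`, while `P(X ≥ ε) > 0` for some
`ε > 0` gives `M(t) ≥ P(X ≥ ε) e^{tε} → ∞`; the intermediate value theorem produces the root.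
-/

open MeasureTheory ProbabilityTheory Real Filter Topology Set

lemma le_exp_mul_sub_one_div {s : ℝ} (hs : 0 < s) (x : ℝ) : x ≤ (exp (s * x) - 1) / s := by
  rw [le_div_iff₀ hs]
  linarith [add_one_le_exp (s * x)]

lemma exp_mul_sub_one_div_le {s t : ℝ} (hs : 0 < s) (hst : s ≤ t) (x : ℝ) :
    (exp (s * x) - 1) / s ≤ (exp (t * x) - 1) / t := by
  have ht : 0 < t := hs.trans_le hst
  have hconv := convexOn_exp.2 (mem_univ (t * x)) (mem_univ 0) (div_nonneg hs.le ht.le)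
    (sub_nonneg.2 ((div_le_one ht).2 hst)) (add_sub_cancel _ _)
  have hsx : s / t * (t * x) = s * x := by field_simp
  simp only [smul_eq_mul, mul_zero, add_zero, exp_zero, mul_one, hsx] at hconv
  rw [div_le_div_iff₀ hs ht]
  have := mul_le_mul_of_nonneg_left hconv ht.le
  field_simp at this
  linarith

lemma abs_exp_mul_sub_one_div_le {s t : ℝ} (hs : 0 < s) (hst : s ≤ t) (x : ℝ) :
    |(exp (s * x) - 1) / s| ≤ |x| + exp (t * x) / t := by
  have ht : 0 < t := hs.trans_le hst
  have hlower := le_exp_mul_sub_one_div hs x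
  have hupper := exp_mul_sub_one_div_le hs hst x
  have : (exp (t * x) - 1) / t ≤ exp (t * x) / t := by gcongr; linarith
  have : 0 ≤ exp (t * x) / t := by positivity
  rw [abs_le]
  constructor <;> linarith [neg_abs_le x, le_abs_self x]

lemma tendsto_exp_mul_sub_one_div (x : ℝ) :
    Tendsto (fun s => (exp (s * x) - 1) / s) (𝓝[>] 0) (𝓝 x) := by
  have hd : HasDerivAt (fun s => exp (s * x)) x 0 := by
    simpa using (hasDerivAt_mul_const x).exp (x := 0)
  rw [hasDerivAt_iff_tendsto_slope] at hd
  refine (hd.mono_left (nhdsGT_le_nhdsNE 0)).congr fun s => ?_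
  simp [slope, div_eq_inv_mul]

lemma HasDerivWithinAt.exists_gt_lt_of_neg {f : ℝ → ℝ} {f' x : ℝ}
    (hf : HasDerivWithinAt f f' (Ici x) x) (hf' : f' < 0) : ∃ y > x, f y < f x := by
  rw [← hasDerivWithinAt_Ioi_iff_Ici, hasDerivWithinAt_iff_tendsto_slope' self_notMem_Ioi] at hf
  obtain ⟨y, hy, hxy⟩ := ((hf.eventually (gt_mem_nhds hf')).and self_mem_nhdsWithin).exists
  refine ⟨y, hxy, ?_⟩
  rw [slope_def_field, div_neg_iff] at hy
  rcases hy with h | h <;> linarith [h.1, h.2, hxy]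

lemma StrictConvexOn.eq_of_apply_eq_apply {f : ℝ → ℝ} {s : Set ℝ} (hf : StrictConvexOn ℝ s f)
    {a u v : ℝ} (ha : a ∈ s) (hu : u ∈ s) (hv : v ∈ s) (hau : a < u) (hav : a < v)
    (hfu : f u = f a) (hfv : f v = f a) : u = v := by
  wlog huv : u ≤ v generalizing u v
  · exact (this hv hu hav hau hfv hfu (le_of_not_ge huv)).symm
  refine huv.eq_or_lt.resolve_right fun huv => ?_
  have := hf.slope_strict_mono_adjacent ha hv hau huv
  simp [hfu, hfv] at this

section Mgf

variable {Ω : Type*} {m : MeasurableSpace Ω} {X : Ω → ℝ} {μ : Measure Ω}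

lemma strictConvexOn_mgf (hX : μ {ω | X ω ≠ 0} ≠ 0) :
    StrictConvexOn ℝ (integrableExpSet X μ) (mgf X μ) := by
  refine ⟨convex_integrableExpSet, fun s hs t ht hst a b ha hb hab => ?_⟩
  have hmul : ∀ ω, (a • s + b • t) * X ω = a • (s * X ω) + b • (t * X ω) := fun ω => by
    simp only [smul_eq_mul]; ring
  have hle : ∀ ω, exp ((a • s + b • t) * X ω) ≤ a * exp (s * X ω) + b * exp (t * X ω) :=
    fun ω => hmul ω ▸ convexOn_exp.2 (mem_univ _) (mem_univ _) ha.le hb.le hab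
  have hlt : ∀ ω, X ω ≠ 0 →
      exp ((a • s + b • t) * X ω) < a * exp (s * X ω) + b * exp (t * X ω) := fun ω hω =>
    hmul ω ▸ strictConvexOn_exp.2 (mem_univ _) (mem_univ _)
      (fun h => hst (mul_right_cancel₀ hω h)) ha hb hab
  have hs' := (integrable_of_mem_integrableExpSet hs).const_mul a
  have ht' := (integrable_of_mem_integrableExpSet ht).const_mul b
  have hmix : Integrable (fun ω => a * exp (s * X ω) + b * exp (t * X ω)) μ := hs'.add ht'
  have hcomb := convex_integrableExpSet hs ht ha.le hb.le hab
  have hgap : 0 < ∫ ω, (a * exp (s * X ω) + b * exp (t * X ω)) -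
      exp ((a • s + b • t) * X ω) ∂μ := by
    refine (integral_pos_iff_support_of_nonneg_ae (ae_of_all _ fun ω => sub_nonneg.2 (hle ω))
      (hmix.sub (integrable_of_mem_integrableExpSet hcomb))).2 ?_
    refine pos_iff_ne_zero.2 fun h0 => hX (measure_mono_null (fun ω hω => ?_) h0)
    exact sub_ne_zero.2 (hlt ω hω).ne'
  rwa [integral_sub hmix hcomb, integral_add hs' ht', integral_const_mul,
    integral_const_mul, sub_pos] at hgap

lemma hasDerivWithinAt_mgf_zero [IsFiniteMeasure μ] (hX : Integrable X μ) {t : ℝ} (ht : 0 < t)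
    (h : Integrable (fun ω => exp (t * X ω)) μ) :
    HasDerivWithinAt (mgf X μ) μ[X] (Ici 0) 0 := by
  rw [← hasDerivWithinAt_Ioi_iff_Ici, hasDerivWithinAt_iff_tendsto_slope' self_notMem_Ioi]
  have hint : ∀ s ∈ Ioc 0 t, Integrable (fun ω => exp (s * X ω)) μ := fun s hs =>
    integrable_exp_mul_of_le_of_le (by simp) h hs.1.le hs.2
  have hslope : ∀ s ∈ Ioc 0 t, slope (mgf X μ) 0 s = ∫ ω, (exp (s * X ω) - 1) / s ∂μ := by
    intro s hs
    rw [slope_def_field, integral_div, integral_sub (hint s hs) (integrable_const 1), mgf_zero',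
      sub_zero, integral_const, smul_eq_mul, mul_one]
    rfl
  have hIoc : Ioc 0 t ∈ 𝓝[>] (0 : ℝ) := Ioc_mem_nhdsGT ht
  refine Tendsto.congr' (eventuallyEq_of_mem hIoc fun s hs => (hslope s hs).symm) ?_
  -- on `(0, t]` the difference quotients lie between `X` and `(exp (t X) - 1) / t`
  refine tendsto_integral_filter_of_dominated_convergence (fun ω => |X ω| + exp (t * X ω) / t)
    ?_ ?_ (hX.abs.add (h.div_const t)) (ae_of_all _ fun ω => tendsto_exp_mul_sub_one_div (X ω))
  · filter_upwards [hIoc] with s hs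
    exact (((hint s hs).sub (integrable_const 1)).div_const s).aestronglyMeasurable
  · filter_upwards [hIoc] with s hs
    exact ae_of_all _ fun ω => abs_exp_mul_sub_one_div_le hs.1 hs.2 (X ω)

lemma exists_pos_measure_setOf_le_ne_zero (hX : 0 < μ {ω | 0 < X ω}) :
    ∃ ε > 0, μ {ω | ε ≤ X ω} ≠ 0 := by
  by_contra! h
  have hsub : {ω | 0 < X ω} ⊆ ⋃ n : ℕ, {ω | 1 / (n + 1 : ℝ) ≤ X ω} := fun ω hω =>
    mem_iUnion.2 ((exists_nat_one_div_lt (show 0 < X ω from hω)).imp fun _ hn => hn.le)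
  exact hX.ne' (measure_mono_null hsub (measure_iUnion_null fun n => h _ Nat.one_div_pos_of_nat))

lemma tendsto_mgf_atTop [IsFiniteMeasure μ] (hX : 0 < μ {ω | 0 < X ω})
    (h : ∀ t, 0 ≤ t → Integrable (fun ω => exp (t * X ω)) μ) :
    Tendsto (mgf X μ) atTop atTop := by
  obtain ⟨ε, hε, hμε⟩ := exists_pos_measure_setOf_le_ne_zero hX
  have hp : 0 < μ.real {ω | ε ≤ X ω} := ENNReal.toReal_pos hμε (measure_ne_top μ _)
  have hchernoff : ∀ t, 0 ≤ t → μ.real {ω | ε ≤ X ω} * exp (t * ε) ≤ mgf X μ t := fun t ht => by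
    have := measure_ge_le_exp_mul_mgf ε ht (h t ht)
    rwa [neg_mul, exp_neg, inv_mul_eq_div, le_div_iff₀ (exp_pos _)] at this
  refine tendsto_atTop_mono' _ (eventually_ge_atTop 0 |>.mono hchernoff) ?_
  exact (tendsto_exp_atTop.comp (tendsto_id.atTop_mul_const hε)).const_mul_atTop hp

end Mgf

theorem stmt_15_general {Ω : Type*} [MeasurableSpace Ω] (μ : Measure Ω) [IsProbabilityMeasure μ]
    (X : Ω → ℝ)
    (hintX : Integrable X μ) (hEX : ∫ ω, X ω ∂μ < 0)
    (hpos : 0 < μ {ω | 0 < X ω})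
    (hmgf : ∀ t : ℝ, 0 ≤ t → Integrable (fun ω => Real.exp (t * X ω)) μ) :
    ∃! w : ℝ, 0 < w ∧ ∫ ω, Real.exp (w * X ω) ∂μ = 1 := by
  have hIci : Ici 0 ⊆ integrableExpSet X μ := hmgf
  have hconv : StrictConvexOn ℝ (integrableExpSet X μ) (mgf X μ) :=
    strictConvexOn_mgf (hpos.trans_le (measure_mono fun ω (h : 0 < X ω) => h.ne')).ne'
  obtain ⟨t₀, ht₀, hlt⟩ := (hasDerivWithinAt_mgf_zero hintX one_pos
    (hmgf 1 zero_le_one)).exists_gt_lt_of_neg hEX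
  rw [mgf_zero] at hlt
  obtain ⟨t₁, hgt, ht₀₁⟩ :=
    (((tendsto_mgf_atTop hpos hmgf).eventually_gt_atTop 1).and (eventually_gt_atTop t₀)).exists
  have hcont : ContinuousOn (mgf X μ) (Icc t₀ t₁) := continuousOn_mgf.mono fun t ht =>
    interior_mono hIci (by rw [interior_Ici]; exact ht₀.trans_le ht.1)
  obtain ⟨w, hw, hw1⟩ := intermediate_value_Icc ht₀₁.le hcont ⟨hlt.le, hgt.le⟩
  have hw₀ : 0 < w := ht₀.trans_le hw.1
  refine ⟨w, ⟨hw₀, hw1⟩, fun v ⟨hv, hv1⟩ => ?_⟩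
  exact hconv.eq_of_apply_eq_apply (hIci self_mem_Ici) (hIci hv.le) (hIci hw₀.le) hv hw₀
    (hv1.trans mgf_zero.symm) (hw1.trans mgf_zero.symm)

theorem stmt_15 {Ω : Type*} [MeasurableSpace Ω] (μ : Measure Ω) [IsProbabilityMeasure μ]
    (X : Ω → ℝ) (hmeas : Measurable X)
    (hintX : Integrable X μ) (hEX : ∫ ω, X ω ∂μ < 0)
    (hpos : 0 < μ {ω | 0 < X ω})
    (hmgf : ∀ t : ℝ, 0 ≤ t → Integrable (fun ω => Real.exp (t * X ω)) μ) :
    ∃! w : ℝ, 0 < w ∧ ∫ ω, Real.exp (w * X ω) ∂μ = 1 :=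
  stmt_15_general μ X hintX hEX hpos hmgf
end

section
/- Let X be a real random variable with E[X] < 0, P(X > 0) > 0, a = sup{t ≥ 0 : E[e^{tX}] < ∞} finite, and lim_{t→a⁻} E[e^{tX}] ≥ 1. Then there exists a unique w ∈ (0, a] with E[e^{wX}] = 1 (interpreting E[e^{aX}] as the left limit if infinite). -/
/-!
The moment generating function `Λ(t) = E[exp (t X)]` is convex on the interval where it is
finite, `Λ(0) = 1`, and its right derivative at `0` is `E[X] < 0`, so `Λ < 1` just to the right
of `0`. A convex function that has dipped below `1` and comes back to `1` is strictly larger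
than `1` afterwards, which gives uniqueness. For existence, either `Λ` reaches `1` inside
`(0, a)` and the intermediate value theorem applies, or `Λ < 1` on `(0, a)`; then Fatou's lemma
makes `exp (a X)` integrable, `Λ` is continuous from the left at `a`, and the condition at `a`
forces `Λ(a) = 1`.
-/

open MeasureTheory Filter Set Topology Real

namespace ProbabilityTheory

variable {Ω : Type*} {m : MeasurableSpace Ω} {μ : Measure Ω} {X : Ω → ℝ}

lemma convexOn_mgf : ConvexOn ℝ (integrableExpSet X μ) (mgf X μ) := by
  refine ⟨convex_integrableExpSet, fun s hs t ht a b ha hb hab => ?_⟩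
  have hst : a • s + b • t ∈ integrableExpSet X μ := convex_integrableExpSet hs ht ha hb hab
  calc mgf X μ (a • s + b • t)
      ≤ ∫ ω, a * exp (s * X ω) + b * exp (t * X ω) ∂μ := by
        refine integral_mono hst ((hs.const_mul a).add (ht.const_mul b)) fun ω => ?_
        simpa [add_mul, mul_assoc] using
          convexOn_exp.2 (mem_univ (s * X ω)) (mem_univ (t * X ω)) ha hb hab
    _ = a • mgf X μ s + b • mgf X μ t := by
        rw [integral_add (hs.const_mul a) (ht.const_mul b), integral_const_mul,
          integral_const_mul]
        rfl

lemma exp_mul_sub_one_div_mono {x s t : ℝ} (hs : 0 < s) (hst : s ≤ t) :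
    (exp (s * x) - 1) / s ≤ (exp (t * x) - 1) / t := by
  have hconv : ConvexOn ℝ univ fun u : ℝ => exp (u * x) :=
    convexOn_exp.comp_linearMap (LinearMap.mulRight ℝ x)
  simpa using hconv.secant_mono (a := 0) (mem_univ _) (mem_univ s) (mem_univ t)
    hs.ne' (hs.trans_le hst).ne' hst

lemma le_exp_mul_sub_one_div {x s : ℝ} (hs : 0 < s) : x ≤ (exp (s * x) - 1) / s := by
  rw [le_div_iff₀ hs]
  linarith [add_one_le_exp (s * x)]

lemma tendsto_exp_mul_sub_one_div (x : ℝ) :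
    Tendsto (fun t => (exp (t * x) - 1) / t) (𝓝[>] 0) (𝓝 x) := by
  have hd : HasDerivAt (fun t : ℝ => exp (t * x)) x 0 := by
    simpa using ((hasDerivAt_id (0 : ℝ)).mul_const x).exp
  simpa [div_eq_inv_mul] using hd.tendsto_slope_zero_right

lemma tendsto_mgf_sub_one_div [IsProbabilityMeasure μ] (hX : Integrable X μ) {t₀ : ℝ}
    (ht₀ : 0 < t₀) (hint : Integrable (fun ω => exp (t₀ * X ω)) μ) :
    Tendsto (fun t => (mgf X μ t - 1) / t) (𝓝[>] 0) (𝓝 μ[X]) := by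
  have hsmall : ∀ᶠ t in 𝓝[>] 0, t ∈ Ioc 0 t₀ := Ioc_mem_nhdsGT ht₀
  have hint_t : ∀ t ∈ Ioc 0 t₀, Integrable (fun ω => exp (t * X ω)) μ := fun t ht =>
    integrable_exp_mul_of_nonneg_of_le hint ht.1.le ht.2
  have hDCT : Tendsto (fun t => ∫ ω, (exp (t * X ω) - 1) / t ∂μ) (𝓝[>] 0) (𝓝 μ[X]) := by
    refine tendsto_integral_filter_of_dominated_convergence
      (fun ω => |X ω| + exp (t₀ * X ω) / t₀) ?_ ?_ (hX.abs.add (hint.div_const t₀))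
      (ae_of_all _ fun ω => tendsto_exp_mul_sub_one_div (X ω))
    · filter_upwards [hsmall] with t ht
      exact (((hint_t t ht).sub (integrable_const 1)).div_const t).aestronglyMeasurable
    · filter_upwards [hsmall] with t ht
      refine ae_of_all _ fun ω => ?_
      have hlow := le_exp_mul_sub_one_div (x := X ω) ht.1
      have hup := exp_mul_sub_one_div_mono (x := X ω) ht.1 ht.2
      have hup' : (exp (t₀ * X ω) - 1) / t₀ ≤ exp (t₀ * X ω) / t₀ := by gcongr; linarith
      have hpos : 0 < exp (t₀ * X ω) / t₀ := by positivity
      rw [norm_eq_abs, abs_le]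
      constructor <;> linarith [neg_abs_le (X ω), abs_nonneg (X ω)]
  refine hDCT.congr' ?_
  filter_upwards [hsmall] with t ht
  rw [integral_div, integral_sub (hint_t t ht) (integrable_const 1)]
  simp [mgf]

lemma eventually_mgf_lt_one [IsProbabilityMeasure μ] (hX : Integrable X μ) (hEX : μ[X] < 0)
    {t₀ : ℝ} (ht₀ : 0 < t₀) (hint : Integrable (fun ω => exp (t₀ * X ω)) μ) :
    ∀ᶠ t in 𝓝[>] 0, mgf X μ t < 1 := by
  filter_upwards [(tendsto_mgf_sub_one_div hX ht₀ hint).eventually_lt_const hEX,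
    self_mem_nhdsWithin] with t ht (htpos : 0 < t)
  have := (div_lt_iff₀ htpos).1 ht
  linarith

lemma subsingleton_mgf_eq_one [IsProbabilityMeasure μ] (hX : Integrable X μ) (hEX : μ[X] < 0) :
    {w : ℝ | 0 < w ∧ mgf X μ w = 1}.Subsingleton := by
  have hint {w : ℝ} (hw : mgf X μ w = 1) : w ∈ integrableExpSet X μ := mgf_pos_iff.1 (hw ▸ one_pos)
  have hne {w₁ w₂ : ℝ} (hw₁ : 0 < w₁) (h₁ : mgf X μ w₁ = 1) (h₂ : mgf X μ w₂ = 1) :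
      ¬ w₁ < w₂ := fun hlt => by
    obtain ⟨t, ht, ht0, htw⟩ :=
      ((eventually_mgf_lt_one hX hEX hw₁ (hint h₁)).and (Ioo_mem_nhdsGT hw₁)).exists
    have hseg : w₁ ∈ openSegment ℝ t w₂ := by
      rw [openSegment_eq_Ioo (htw.trans hlt)]
      exact ⟨htw, hlt⟩
    have := convexOn_mgf.lt_right_of_left_lt
      (integrable_exp_mul_of_nonneg_of_le (hint h₁) ht0.le htw.le) (hint h₂) hseg (h₁ ▸ ht)
    rw [h₁, h₂] at this
    exact lt_irrefl 1 this
  rintro w₁ ⟨hw₁, h₁⟩ w₂ ⟨hw₂, h₂⟩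
  exact le_antisymm (not_lt.1 (hne hw₂ h₂ h₁)) (not_lt.1 (hne hw₁ h₁ h₂))

lemma continuousOn_mgf_Icc {u v : ℝ} (hu : Integrable (fun ω => exp (u * X ω)) μ)
    (hv : Integrable (fun ω => exp (v * X ω)) μ) :
    ContinuousOn (mgf X μ) (Icc u v) := by
  refine continuousOn_of_dominated (bound := fun ω => exp (u * X ω) + exp (v * X ω))
    (fun t ht => (integrable_exp_mul_of_le_of_le hu hv ht.1 ht.2).aestronglyMeasurable)
    (fun t ht => ae_of_all _ fun ω => ?_) (hu.add hv) (ae_of_all _ fun ω => by fun_prop)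
  rw [norm_of_nonneg (exp_pos _).le]
  rcases le_total 0 (X ω) with hX | hX
  · exact (exp_le_exp.2 (mul_le_mul_of_nonneg_right ht.2 hX)).trans
      (le_add_of_nonneg_left (exp_pos _).le)
  · exact (exp_le_exp.2 (mul_le_mul_of_nonpos_right ht.1 hX)).trans
      (le_add_of_nonneg_right (exp_pos _).le)

lemma integrable_exp_mul_of_eventually_mgf_le {l : Filter ℝ} [l.NeBot] [l.IsCountablyGenerated]
    {s C : ℝ} (hl : l ≤ 𝓝 s) (hX : AEMeasurable X μ)
    (hint : ∀ᶠ t in l, Integrable (fun ω => exp (t * X ω)) μ)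
    (hC : ∀ᶠ t in l, mgf X μ t ≤ C) :
    Integrable (fun ω => exp (s * X ω)) μ := by
  refine ⟨aemeasurable_exp_mul s hX, ?_⟩
  have hlim (ω : Ω) : Tendsto (fun t => ‖exp (t * X ω)‖ₑ) l (𝓝 ‖exp (s * X ω)‖ₑ) :=
    ((by fun_prop : Continuous fun t => ‖exp (t * X ω)‖ₑ).tendsto s).mono_left hl
  calc ∫⁻ ω, ‖exp (s * X ω)‖ₑ ∂μ
      = ∫⁻ ω, liminf (fun t => ‖exp (t * X ω)‖ₑ) l ∂μ := by simp only [(hlim _).liminf_eq]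
    _ ≤ liminf (fun t => ∫⁻ ω, ‖exp (t * X ω)‖ₑ ∂μ) l :=
        lintegral_liminf_le' fun t => (aemeasurable_exp_mul t hX).enorm
    _ ≤ ENNReal.ofReal C := by
        refine liminf_le_of_frequently_le' (Eventually.frequently ?_)
        filter_upwards [hint, hC] with t ht htC
        rw [← ofReal_integral_norm_eq_lintegral_enorm ht]
        simp only [norm_of_nonneg (exp_pos _).le]
        exact ENNReal.ofReal_le_ofReal htC
    _ < ⊤ := ENNReal.ofReal_lt_top

theorem exists_mem_Ioc_mgf_eq_one [IsProbabilityMeasure μ] (hX : Integrable X μ)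
    (hEX : μ[X] < 0) {a : ℝ} (ha : 0 < a)
    (hmgf : ∀ t ∈ Ico 0 a, Integrable (fun ω => exp (t * X ω)) μ)
    (hlim : ∀ c < 1, ∀ᶠ t in 𝓝[<] a, c ≤ mgf X μ t) :
    ∃ w ∈ Ioc 0 a, mgf X μ w = 1 := by
  obtain ⟨t₁, ht₁, ht₁0, ht₁a⟩ := ((eventually_mgf_lt_one hX hEX (half_pos ha)
    (hmgf _ ⟨(half_pos ha).le, half_lt_self ha⟩)).and (Ioo_mem_nhdsGT ha)).exists
  have hint₁ := hmgf t₁ ⟨ht₁0.le, ht₁a⟩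
  suffices ∃ s ∈ Ioc t₁ a, Integrable (fun ω => exp (s * X ω)) μ ∧ 1 ≤ mgf X μ s by
    obtain ⟨s, ⟨hts, hsa⟩, hs, h1s⟩ := this
    obtain ⟨w, hw, hw1⟩ :=
      intermediate_value_Icc hts.le (continuousOn_mgf_Icc hint₁ hs) ⟨ht₁.le, h1s⟩
    exact ⟨w, ⟨ht₁0.trans_le hw.1, hw.2.trans hsa⟩, hw1⟩
  by_cases hbelow : ∀ s ∈ Ioo t₁ a, mgf X μ s < 1
  · have hnear : Ioo t₁ a ∈ 𝓝[<] a := Ioo_mem_nhdsLT ht₁a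
    have hint_a : Integrable (fun ω => exp (a * X ω)) μ :=
      integrable_exp_mul_of_eventually_mgf_le nhdsWithin_le_nhds hX.aemeasurable
        (mem_of_superset hnear fun t ht => hmgf t ⟨(ht₁0.trans ht.1).le, ht.2⟩)
        (mem_of_superset hnear fun t ht => (hbelow t ht).le)
    have hcont : Tendsto (mgf X μ) (𝓝[<] a) (𝓝 (mgf X μ a)) :=
      (continuousOn_mgf_Icc hint₁ hint_a a ⟨ht₁a.le, le_rfl⟩).mono_of_mem_nhdsWithin
        (mem_of_superset hnear Ioo_subset_Icc_self)
    exact ⟨a, ⟨ht₁a, le_rfl⟩, hint_a,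
      le_of_forall_lt_imp_le_of_dense fun c hc => ge_of_tendsto hcont (hlim c hc)⟩
  · push Not at hbelow
    obtain ⟨s, hs, h1s⟩ := hbelow
    exact ⟨s, ⟨hs.1, hs.2.le⟩, hmgf s ⟨(ht₁0.trans hs.1).le, hs.2⟩, h1s⟩

end ProbabilityTheory

open ProbabilityTheory in
theorem stmt_16_general {Ω : Type*} [MeasurableSpace Ω] (μ : Measure Ω) [IsProbabilityMeasure μ]
    (X : Ω → ℝ) (a : ℝ) (ha : 0 < a)
    (hintX : Integrable X μ) (hEX : ∫ ω, X ω ∂μ < 0)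
    (hmgf : ∀ t ∈ Set.Ico (0 : ℝ) a, Integrable (fun ω => Real.exp (t * X ω)) μ)
    (hlim : ∀ c : ℝ, c < 1 →
      ∀ᶠ t in nhdsWithin a (Set.Iio a), c ≤ ∫ ω, Real.exp (t * X ω) ∂μ) :
    ∃! w : ℝ, w ∈ Set.Ioc 0 a ∧ ∫ ω, Real.exp (w * X ω) ∂μ = 1 := by
  obtain ⟨w, hw, hw1⟩ := exists_mem_Ioc_mgf_eq_one hintX hEX ha hmgf hlim
  exact ⟨w, ⟨hw, hw1⟩, fun y hy => subsingleton_mgf_eq_one hintX hEX ⟨hy.1.1, hy.2⟩ ⟨hw.1, hw1⟩⟩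

theorem stmt_16 {Ω : Type*} [MeasurableSpace Ω] (μ : Measure Ω) [IsProbabilityMeasure μ]
    (X : Ω → ℝ) (hmeas : Measurable X) (a : ℝ) (ha : 0 < a)
    (hintX : Integrable X μ) (hEX : ∫ ω, X ω ∂μ < 0)
    (hpos : 0 < μ {ω | 0 < X ω})
    (hmgf : ∀ t ∈ Set.Ico (0 : ℝ) a, Integrable (fun ω => Real.exp (t * X ω)) μ)
    (hlim : ∀ c : ℝ, c < 1 →
      ∀ᶠ t in nhdsWithin a (Set.Iio a), c ≤ ∫ ω, Real.exp (t * X ω) ∂μ) :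
    ∃! w : ℝ, w ∈ Set.Ioc 0 a ∧ ∫ ω, Real.exp (w * X ω) ∂μ = 1 :=
  stmt_16_general μ X a ha hintX hEX hmgf hlim
end

section
/- Let (X_n) be a causal Bernoulli shift X_n = H(ξ_{n−j}, j ∈ ℕ) with i.i.d. innovations (ξ_n), and continuity coefficients d_n = ‖sup_u |H(ξ_n, …, ξ_1, ξ_0, ξ_{−1}, …) − H(ξ_n, …, ξ_1, u_0, u_{−1}, …)|‖_∞ satisfying D = ∑_{j≥0} d_j < ∞. Then for all t ≥ 0 and n, m ≥ 1, E[e^{t S_{n+m}}] ≤ e^{4tD} E[e^{t S_n}] E[e^{t S_m}], where S_n = ∑_{j=1}^n X_j; consequently c(t) = lim_n (1/n) log E[e^{t S_n}] exists and is finite whenever the exponential moments are finite. -/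
/-!
Replacing the innovations before the start of a block by zeros changes its `j`-th summand by at
most `d j`, hence the block sum by at most `D`. After this truncation `S_n` and `S_{n+m} - S_n`
become functions of the disjoint windows `ξ_1, …, ξ_n` and `ξ_{n+1}, …, ξ_{n+m}`, so they are
independent, and the second one has the law of the truncated `S_m` because the innovations are
i.i.d. Four truncations cost the factor `exp (4 t D)`. Consequently `log E[exp (t S_n)] + 4 t D`
is subadditive; it is bounded below linearly because `H` is bounded (`|H x - H y| ≤ d 0`), and
Fekete's lemma gives the limit.
-/
open MeasureTheory ProbabilityTheory Finset Filter Topology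

section Probability

variable {Ω : Type*} [MeasurableSpace Ω] {μ : Measure Ω}

lemma integrable_exp_mul_of_le [IsFiniteMeasure μ] {f : Ω → ℝ} (hf : Measurable f)
    {t C : ℝ} (ht : 0 ≤ t) (hfC : ∀ ω, f ω ≤ C) :
    Integrable (fun ω ↦ Real.exp (t * f ω)) μ := by
  refine .of_bound (by fun_prop) (Real.exp (t * C)) (.of_forall fun ω ↦ ?_)
  rw [Real.norm_eq_abs, abs_of_pos (Real.exp_pos _)]
  gcongr
  exact hfC ω

lemma integral_exp_mul_le_exp_mul_integral {f g : Ω → ℝ} {t c : ℝ} (ht : 0 ≤ t)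
    (hfg : ∀ ω, f ω ≤ g ω + c) (hg : Integrable (fun ω ↦ Real.exp (t * g ω)) μ) :
    ∫ ω, Real.exp (t * f ω) ∂μ ≤ Real.exp (t * c) * ∫ ω, Real.exp (t * g ω) ∂μ := by
  rw [← integral_const_mul]
  refine integral_mono_of_nonneg (.of_forall fun ω ↦ (Real.exp_pos _).le) (hg.const_mul _)
    (.of_forall fun ω ↦ ?_)
  show Real.exp _ ≤ Real.exp _ * Real.exp _
  rw [← Real.exp_add]
  gcongr
  nlinarith [hfg ω]

lemma mul_le_log_integral_exp_mul [IsProbabilityMeasure μ] {f : Ω → ℝ} {t a : ℝ} (ht : 0 ≤ t)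
    (haf : ∀ ω, a ≤ f ω) (hf : Integrable (fun ω ↦ Real.exp (t * f ω)) μ) :
    t * a ≤ Real.log (∫ ω, Real.exp (t * f ω) ∂μ) := by
  have := integral_exp_mul_le_exp_mul_integral (μ := μ) (f := fun _ ↦ a) (c := 0) ht
    (fun ω ↦ by simpa using haf ω) hf
  rw [integral_const, probReal_univ, one_smul, mul_zero, Real.exp_zero, one_mul] at this
  rw [← Real.log_exp (t * a)]
  exact Real.log_le_log (Real.exp_pos _) this

variable {ι : Type*} {ξ : ι → Ω → ℝ}

lemma ProbabilityTheory.iIndepFun.indepFun_comp_of_dependsOn (hmeas : ∀ i, Measurable (ξ i))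
    (hξ : iIndepFun ξ μ) {S T : Finset ι} (hST : Disjoint S T)
    {F G : (ι → ℝ) → ℝ} (hF : Measurable F) (hG : Measurable G)
    (hFS : DependsOn F S) (hGT : DependsOn G T) :
    IndepFun (fun ω ↦ F (fun i ↦ ξ i ω)) (fun ω ↦ G (fun i ↦ ξ i ω)) μ := by
  classical
  let extend (U : Finset ι) (v : U → ℝ) : ι → ℝ := fun i ↦ if h : i ∈ U then v ⟨i, h⟩ else 0
  have hextend (U : Finset ι) : Measurable (extend U) := by
    refine measurable_pi_lambda _ fun i ↦ ?_
    by_cases h : i ∈ U <;> simp only [extend, h, dite_true, dite_false] <;> fun_prop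
  have hrestrict {K : (ι → ℝ) → ℝ} {U : Finset ι} (hK : DependsOn K U) :
      (fun ω ↦ K (fun i ↦ ξ i ω)) = (K ∘ extend U) ∘ fun ω (i : U) ↦ ξ i ω :=
    funext fun ω ↦ hK fun i hi ↦ by simp [extend, Finset.mem_coe.mp hi]
  rw [hrestrict hFS, hrestrict hGT]
  exact (hξ.indepFun_finset S T hST hmeas).comp (hF.comp (hextend S)) (hG.comp (hextend T))

lemma ProbabilityTheory.iIndepFun.map_precomp_eq (hmeas : ∀ i, Measurable (ξ i))
    (hξ : iIndepFun ξ μ) (hident : ∀ i j, μ.map (ξ i) = μ.map (ξ j)) {g : ι → ι}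
    (hg : g.Injective) :
    μ.map (fun ω i ↦ ξ (g i) ω) = μ.map (fun ω i ↦ ξ i ω) := by
  rw [(hξ.precomp hg).map_fun_eq_infinitePi_map (fun i ↦ hmeas _),
    hξ.map_fun_eq_infinitePi_map hmeas]
  exact congrArg _ (funext fun i ↦ hident _ _)

lemma ProbabilityTheory.iIndepFun.integral_precomp_eq (hmeas : ∀ i, Measurable (ξ i))
    (hξ : iIndepFun ξ μ) (hident : ∀ i j, μ.map (ξ i) = μ.map (ξ j)) {g : ι → ι}
    (hg : g.Injective) {F : (ι → ℝ) → ℝ} (hF : Measurable F) :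
    ∫ ω, F (fun i ↦ ξ (g i) ω) ∂μ = ∫ ω, F (fun i ↦ ξ i ω) ∂μ := by
  rw [← integral_map (measurable_pi_lambda _ fun i ↦ hmeas (g i)).aemeasurable
    hF.aestronglyMeasurable, hξ.map_precomp_eq hmeas hident hg,
    integral_map (measurable_pi_lambda _ hmeas).aemeasurable hF.aestronglyMeasurable]

end Probability

lemma exists_tendsto_log_div_of_le_exp_mul_mul {I : ℕ → ℝ} {a c : ℝ} (hc : 0 ≤ c)
    (hpos : ∀ k, 0 < I k) (hsub : ∀ k l, I (k + l) ≤ Real.exp c * I k * I l)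
    (hlow : ∀ k, a * k ≤ Real.log (I k)) :
    ∃ L, Tendsto (fun k : ℕ ↦ Real.log (I k) / k) atTop (𝓝 L) := by
  have hu : Subadditive fun k ↦ Real.log (I k) + c := fun k l ↦ by
    have := Real.log_le_log (hpos _) (hsub k l)
    rw [Real.log_mul (mul_pos (Real.exp_pos c) (hpos k)).ne' (hpos l).ne',
      Real.log_mul (Real.exp_pos c).ne' (hpos k).ne',
      Real.log_exp] at this
    linarith
  have hbdd : BddBelow (Set.range fun k : ℕ ↦ (Real.log (I k) + c) / k) := by
    refine ⟨min a 0, Set.forall_mem_range.2 fun k ↦ ?_⟩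
    rcases k.eq_zero_or_pos with rfl | hk
    · simp
    · rw [le_div_iff₀ (by exact_mod_cast hk)]
      nlinarith [hlow k, min_le_left a 0]
  refine ⟨hu.lim, ?_⟩
  have := (hu.tendsto_lim hbdd).sub (tendsto_const_div_atTop_nhds_zero_nat c)
  simpa [add_div] using this

/-- The continuity coefficients `d_k` of the paper: changing the arguments of `H` at lags `≥ k`
moves its value by at most `d k`. -/
def IsLagModulus (H : (ℕ → ℝ) → ℝ) (d : ℕ → ℝ) : Prop :=
  ∀ (k : ℕ) (x y : ℕ → ℝ), (∀ j < k, x j = y j) → |H x - H y| ≤ d k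

namespace IsLagModulus

variable {H : (ℕ → ℝ) → ℝ} {d : ℕ → ℝ}

lemma nonneg (hd : IsLagModulus H d) (k : ℕ) : 0 ≤ d k :=
  (abs_nonneg _).trans (hd k 0 0 fun _ _ ↦ rfl)

lemma abs_sub_le_zero (hd : IsLagModulus H d) (x y : ℕ → ℝ) : |H x - H y| ≤ d 0 :=
  hd 0 x y fun _ h ↦ absurd h (Nat.not_lt_zero _)

lemma sum_le {α : Type*} (hd : IsLagModulus H d) (s : Finset α) (x : α → ℕ → ℝ) :
    ∑ j ∈ s, H (x j) ≤ #s * (H 0 + d 0) := by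
  rw [← nsmul_eq_mul]
  exact Finset.sum_le_card_nsmul s _ _ fun j _ ↦ by
    linarith [(abs_le.1 (hd.abs_sub_le_zero (x j) 0)).2]

lemma le_sum {α : Type*} (hd : IsLagModulus H d) (s : Finset α) (x : α → ℕ → ℝ) :
    #s * (H 0 - d 0) ≤ ∑ j ∈ s, H (x j) := by
  rw [← nsmul_eq_mul]
  exact Finset.card_nsmul_le_sum s _ _ fun j _ ↦ by
    linarith [(abs_le.1 (hd.abs_sub_le_zero (x j) 0)).1]

end IsLagModulus

section BernoulliShift

variable (H : (ℕ → ℝ) → ℝ)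

def partialSum (y : ℤ → ℝ) (k : ℕ) : ℝ :=
  ∑ j ∈ Icc 1 k, H fun i ↦ y (j - i)

/-- `partialSum` with the innovations before time `1` replaced by `0`, so that it only depends on
`y 1, …, y k`. -/
def truncatedSum (y : ℤ → ℝ) (k : ℕ) : ℝ :=
  ∑ j ∈ Icc 1 k, H fun i ↦ if i < j then y (j - i) else 0

lemma partialSum_add (y : ℤ → ℝ) (n m : ℕ) :
    partialSum H y (n + m) = partialSum H y n + partialSum H (fun i ↦ y (n + i)) m := by
  have hIcc (k : ℕ) : Icc 1 k = Ioc 0 k := by ext; simp only [mem_Icc, mem_Ioc]; omega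
  simp only [partialSum, hIcc]
  have hshift : Ioc n (n + m) = (Ioc 0 m).map (addLeftEmbedding n) := by
    simp [Finset.map_add_left_Ioc]
  rw [← Finset.sum_Ioc_consecutive _ (Nat.zero_le n) (Nat.le_add_right n m), hshift,
    Finset.sum_map]
  simp [add_sub_assoc]

lemma truncatedSum_dependsOn (s : ℤ) (k : ℕ) :
    DependsOn (fun y : ℤ → ℝ ↦ truncatedSum H (fun i ↦ y (s + i)) k) ↑(Icc (s + 1) (s + k)) := by
  intro y z hyz
  refine Finset.sum_congr rfl fun j hj ↦ congrArg H (funext fun i ↦ ?_)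
  split_ifs with hij
  · exact hyz _ (by simp only [mem_Icc, coe_Icc, Set.mem_Icc] at hj ⊢; omega)
  · rfl

variable {H}

@[fun_prop]
lemma measurable_partialSum (hH : Measurable H) (k : ℕ) :
    Measurable fun y ↦ partialSum H y k :=
  Finset.measurable_sum _ fun _ _ ↦ hH.comp (measurable_pi_lambda _ fun _ ↦ measurable_pi_apply _)

@[fun_prop]
lemma measurable_truncatedSum (hH : Measurable H) (k : ℕ) :
    Measurable fun y ↦ truncatedSum H y k := by
  refine Finset.measurable_sum _ fun j _ ↦ hH.comp (measurable_pi_lambda _ fun i ↦ ?_)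
  split_ifs
  · exact measurable_pi_apply _
  · exact measurable_const

variable {d : ℕ → ℝ}

lemma abs_partialSum_sub_truncatedSum_le (hd : IsLagModulus H d) (hd_sum : Summable d)
    (y : ℤ → ℝ) (k : ℕ) : |partialSum H y k - truncatedSum H y k| ≤ ∑' j, d j := by
  rw [partialSum, truncatedSum, ← Finset.sum_sub_distrib]
  calc _ ≤ ∑ j ∈ Icc 1 k, d j := (Finset.abs_sum_le_sum_abs _ _).trans <|
        Finset.sum_le_sum fun j _ ↦ hd j _ _ fun i hi ↦ by simp [hi]
    _ ≤ ∑' j, d j := hd_sum.sum_le_tsum _ fun j _ ↦ hd.nonneg j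

variable {Ω : Type*} [MeasurableSpace Ω] {μ : Measure Ω} {ξ : ℤ → Ω → ℝ}

lemma integral_exp_truncatedSum_add_shift (hmeas : ∀ i, Measurable (ξ i))
    (hindep : iIndepFun ξ μ) (hident : ∀ i j, μ.map (ξ i) = μ.map (ξ j)) (hH : Measurable H)
    (t : ℝ) (n m : ℕ) :
    ∫ ω, Real.exp (t * (truncatedSum H (fun i ↦ ξ i ω) n
        + truncatedSum H (fun i ↦ ξ (n + i) ω) m)) ∂μ
      = (∫ ω, Real.exp (t * truncatedSum H (fun i ↦ ξ i ω) n) ∂μ)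
        * ∫ ω, Real.exp (t * truncatedSum H (fun i ↦ ξ i ω) m) ∂μ := by
  have hdep (s : ℤ) (k : ℕ) : DependsOn (fun y : ℤ → ℝ ↦
      Real.exp (t * truncatedSum H (fun i ↦ y (s + i)) k)) ↑(Icc (s + 1) (s + k)) :=
    fun _ _ h ↦ congrArg (fun a ↦ Real.exp (t * a)) (truncatedSum_dependsOn H s k h)
  have hindep_blocks : IndepFun (fun ω ↦ Real.exp (t * truncatedSum H (fun i ↦ ξ i ω) n))
      (fun ω ↦ Real.exp (t * truncatedSum H (fun i ↦ ξ (n + i) ω) m)) μ :=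
    hindep.indepFun_comp_of_dependsOn hmeas (S := Icc 1 (n : ℤ)) (T := Icc (n + 1) (n + m))
      (Finset.disjoint_left.2 fun a ha hb ↦ by simp only [mem_Icc] at ha hb; omega)
      (F := fun y ↦ Real.exp (t * truncatedSum H y n)) (by fun_prop) (by fun_prop)
      (by simpa using hdep 0 n) (hdep n m)
  have hstat : ∫ ω, Real.exp (t * truncatedSum H (fun i ↦ ξ (n + i) ω) m) ∂μ
      = ∫ ω, Real.exp (t * truncatedSum H (fun i ↦ ξ i ω) m) ∂μ :=
    hindep.integral_precomp_eq hmeas hident (add_right_injective (n : ℤ))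
      (F := fun y ↦ Real.exp (t * truncatedSum H y m)) (by fun_prop)
  rw [← hstat, ← hindep_blocks.integral_mul_eq_mul_integral
    (Measurable.aestronglyMeasurable (by fun_prop))
    (Measurable.aestronglyMeasurable (by fun_prop))]
  simp only [mul_add, Real.exp_add, Pi.mul_apply]

lemma integral_exp_partialSum_add_le [IsProbabilityMeasure μ] (hmeas : ∀ i, Measurable (ξ i))
    (hindep : iIndepFun ξ μ) (hident : ∀ i j, μ.map (ξ i) = μ.map (ξ j)) (hH : Measurable H)
    (hd : IsLagModulus H d) (hd_sum : Summable d) {t : ℝ} (ht : 0 ≤ t) (n m : ℕ) :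
    ∫ ω, Real.exp (t * partialSum H (fun i ↦ ξ i ω) (n + m)) ∂μ
      ≤ Real.exp (4 * t * ∑' j, d j)
        * (∫ ω, Real.exp (t * partialSum H (fun i ↦ ξ i ω) n) ∂μ)
        * ∫ ω, Real.exp (t * partialSum H (fun i ↦ ξ i ω) m) ∂μ := by
  set D := ∑' j, d j
  have hclose (y : ℤ → ℝ) (k : ℕ) := abs_le.1 (abs_partialSum_sub_truncatedSum_le hd hd_sum y k)
  have hle_partialSum (k : ℕ) : ∫ ω, Real.exp (t * truncatedSum H (fun i ↦ ξ i ω) k) ∂μ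
      ≤ Real.exp (t * D) * ∫ ω, Real.exp (t * partialSum H (fun i ↦ ξ i ω) k) ∂μ :=
    integral_exp_mul_le_exp_mul_integral ht (fun ω ↦ by linarith [(hclose (fun i ↦ ξ i ω) k).1])
      (integrable_exp_mul_of_le (by fun_prop) ht fun ω ↦ hd.sum_le _ _)
  calc ∫ ω, Real.exp (t * partialSum H (fun i ↦ ξ i ω) (n + m)) ∂μ
      ≤ Real.exp (t * (2 * D)) * ∫ ω, Real.exp (t * (truncatedSum H (fun i ↦ ξ i ω) n
          + truncatedSum H (fun i ↦ ξ (n + i) ω) m)) ∂μ := by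
        refine integral_exp_mul_le_exp_mul_integral ht (fun ω ↦ ?_)
          (integrable_exp_mul_of_le (by fun_prop) ht fun ω ↦
            add_le_add (hd.sum_le _ _) (hd.sum_le _ _))
        rw [partialSum_add]
        linarith [(hclose (fun i ↦ ξ i ω) n).2, (hclose (fun i ↦ ξ (n + i) ω) m).2]
    _ = Real.exp (t * (2 * D)) * ((∫ ω, Real.exp (t * truncatedSum H (fun i ↦ ξ i ω) n) ∂μ)
          * ∫ ω, Real.exp (t * truncatedSum H (fun i ↦ ξ i ω) m) ∂μ) := by
        rw [integral_exp_truncatedSum_add_shift hmeas hindep hident hH t n m]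
    _ ≤ Real.exp (t * (2 * D))
          * ((Real.exp (t * D) * ∫ ω, Real.exp (t * partialSum H (fun i ↦ ξ i ω) n) ∂μ)
            * (Real.exp (t * D) * ∫ ω, Real.exp (t * partialSum H (fun i ↦ ξ i ω) m) ∂μ)) := by
        gcongr
        exacts [hle_partialSum n, hle_partialSum m]
    _ = _ := by
        rw [show 4 * t * D = t * (2 * D) + t * D + t * D by ring, Real.exp_add, Real.exp_add]
        ring

end BernoulliShift

theorem stmt_18 {Ω : Type*} [MeasurableSpace Ω] (μ : Measure Ω) [IsProbabilityMeasure μ]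
    (ξ : ℤ → Ω → ℝ) (hξmeas : ∀ i, Measurable (ξ i))
    (hindep : ProbabilityTheory.iIndepFun ξ μ)
    (hident : ∀ i j : ℤ, Measure.map (ξ i) μ = Measure.map (ξ j) μ)
    (H : (ℕ → ℝ) → ℝ) (hH : Measurable H)
    (X : ℤ → Ω → ℝ) (hX : ∀ n ω, X n ω = H (fun j => ξ (n - (j : ℤ)) ω))
    (d : ℕ → ℝ) (hd_sum : Summable d)
    (hd : ∀ (k : ℕ) (x y : ℕ → ℝ), (∀ j < k, x j = y j) → |H x - H y| ≤ d k)
    (D : ℝ) (hD : D = ∑' j, d j)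
    (t : ℝ) (ht : 0 ≤ t) :
    (∀ n m : ℕ, 1 ≤ n → 1 ≤ m →
      ∫ ω, Real.exp (t * ∑ j ∈ Finset.Icc 1 (n + m), X (j : ℤ) ω) ∂μ
        ≤ Real.exp (4 * t * D)
            * (∫ ω, Real.exp (t * ∑ j ∈ Finset.Icc 1 n, X (j : ℤ) ω) ∂μ)
            * ∫ ω, Real.exp (t * ∑ j ∈ Finset.Icc 1 m, X (j : ℤ) ω) ∂μ) ∧
    ((∀ n : ℕ, Integrable (fun ω => Real.exp (t * ∑ j ∈ Finset.Icc 1 n, X (j : ℤ) ω)) μ) →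
      ∃ c : ℝ, Filter.Tendsto
        (fun n : ℕ =>
          Real.log (∫ ω, Real.exp (t * ∑ j ∈ Finset.Icc 1 n, X (j : ℤ) ω) ∂μ) / n)
        Filter.atTop (nhds c)) := by
  replace hd : IsLagModulus H d := hd
  have hS (k : ℕ) (ω : Ω) : ∑ j ∈ Icc 1 k, X j ω = partialSum H (fun i ↦ ξ i ω) k := by
    simp [partialSum, hX]
  simp_rw [hS]
  have hsub := integral_exp_partialSum_add_le hξmeas hindep hident hH hd hd_sum ht
  have hint (k : ℕ) : Integrable (fun ω ↦ Real.exp (t * partialSum H (fun i ↦ ξ i ω) k)) μ :=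
    integrable_exp_mul_of_le (by fun_prop) ht fun ω ↦ hd.sum_le _ _
  refine ⟨fun n m _ _ ↦ hD ▸ hsub n m, fun _ ↦ ?_⟩
  refine exists_tendsto_log_div_of_le_exp_mul_mul (a := t * (H 0 - d 0))
    (mul_nonneg (by positivity) (tsum_nonneg hd.nonneg)) (fun k ↦ integral_exp_pos (hint k))
    hsub fun k ↦ ?_
  have := mul_le_log_integral_exp_mul (f := fun ω ↦ partialSum H (fun i ↦ ξ i ω) k) ht
    (fun ω ↦ hd.le_sum _ _) (hint k)
  simp only [Nat.card_Icc, add_tsub_cancel_right] at this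
  linarith
end
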